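/- Let M₁ and M₂ be means such that Q_{M₁}(x) > Q_{M₂}(x) for all x > 0. Then M₁ ≥ M₂ near the first bisector; precisely, for every a > 0 there exists δ > 0 such that for all real s with |s| < δ and a − |s| > 0 one has M₁(a + s, a − s) ≥ M₂(a + s, a − s). -/

import Mathlib

open Real Set MeasureTheory

/-- A (bivariate) mean: a C^infty function on (0,∞)² with values in (0,∞),
internal (between min and max) and symmetric. -/
def IsMean (M : ℝ → ℝ → ℝ) : Prop :=
  ContDiffOn ℝ (⊤ : ℕ∞) (fun p : ℝ × ℝ => M p.1 p.2) {p : ℝ × ℝ | 0 < p.1 ∧ 0 < p.2} ∧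
  (∀ x y : ℝ, 0 < x → 0 < y → 0 < M x y) ∧
  (∀ x y : ℝ, 0 < x → 0 < y → min x y ≤ M x y ∧ M x y ≤ max x y) ∧
  (∀ x y : ℝ, 0 < x → 0 < y → M x y = M y x)

/-- The characteristic function of a mean: `Q_M(x) = ∂²M/∂x² (x,x)`. -/
noncomputable def charFun (M : ℝ → ℝ → ℝ) (x : ℝ) : ℝ :=
  iteratedDeriv 2 (fun s => M s x) x

lemma second_deriv_line {f : ℝ × ℝ → ℝ} {U : Set (ℝ × ℝ)} (hU : IsOpen U)
    (hf : ContDiffOn ℝ (⊤ : ℕ∞) f U) {p₀ : ℝ × ℝ} (hp : p₀ ∈ U) (v : ℝ × ℝ) :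
    deriv (deriv (fun t : ℝ => f (p₀ + t • v))) 0
      = (fderiv ℝ (fderiv ℝ f) p₀ v) v := by
  have hF : ContDiffOn ℝ (⊤ : ℕ∞) (fderiv ℝ f) U :=
    hf.fderiv_of_isOpen hU (by exact_mod_cast le_rfl)
  set L : ℝ → ℝ × ℝ := fun t => p₀ + t • v with hLdef
  have hLc : Continuous L := by fun_prop
  have hLd : ∀ t : ℝ, HasDerivAt L v t := by
    intro t
    simpa [hLdef] using ((hasDerivAt_id t).smul_const v).const_add p₀
  have hL0 : L 0 = p₀ := by simp [hLdef]
  have hTopen : IsOpen (L ⁻¹' U) := hU.preimage hLc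
  have h0T : (0 : ℝ) ∈ L ⁻¹' U := by simp [hLdef, hp]
  have hder : ∀ t ∈ L ⁻¹' U, HasDerivAt (fun t => f (L t)) ((fderiv ℝ f (L t)) v) t := by
    intro t ht
    have hdf : DifferentiableAt ℝ f (L t) :=
      (hf.contDiffAt (hU.mem_nhds ht)).differentiableAt (by simp)
    exact hdf.hasFDerivAt.comp_hasDerivAt t (hLd t)
  have hev : deriv (fun t => f (L t)) =ᶠ[nhds 0] fun t => (fderiv ℝ f (L t)) v :=
    Filter.eventually_of_mem (hTopen.mem_nhds h0T) (fun t ht => (hder t ht).deriv)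
  rw [hev.deriv_eq]
  have hDF : HasFDerivAt (fderiv ℝ f) (fderiv ℝ (fderiv ℝ f) p₀) (L 0) := by
    rw [hL0]
    exact ((hF.contDiffAt (hU.mem_nhds hp)).differentiableAt
      (by simp)).hasFDerivAt
  have h1 : HasDerivAt (fun t => fderiv ℝ f (L t)) (fderiv ℝ (fderiv ℝ f) p₀ v) 0 :=
    hDF.comp_hasDerivAt 0 (hLd 0)
  have h2 : HasDerivAt (fun t => (fderiv ℝ f (L t)) v)
      ((fderiv ℝ (fderiv ℝ f) p₀ v) v) 0 := by
    simpa using h1.clm_apply (hasDerivAt_const 0 v)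
  exact h2.deriv

lemma isOpen_quadrant : IsOpen {p : ℝ × ℝ | 0 < p.1 ∧ 0 < p.2} := by
  have : {p : ℝ × ℝ | 0 < p.1 ∧ 0 < p.2} = {p : ℝ × ℝ | 0 < p.1} ∩ {p : ℝ × ℝ | 0 < p.2} := rfl
  rw [this]
  exact (isOpen_lt continuous_const continuous_fst).inter
    (isOpen_lt continuous_const continuous_snd)

lemma mean_diag {M : ℝ → ℝ → ℝ} (hM : IsMean M) {x : ℝ} (hx : 0 < x) : M x x = x := by
  have h := hM.2.2.1 x x hx hx
  rw [min_self, max_self] at h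
  exact le_antisymm h.2 h.1

lemma mean_second_deriv {M : ℝ → ℝ → ℝ} (hM : IsMean M) {a : ℝ} (ha : 0 < a) :
    deriv (deriv (fun s : ℝ => M (a + s) (a - s))) 0 = 4 * charFun M a := by
  set f : ℝ × ℝ → ℝ := fun p => M p.1 p.2 with hfdef
  set U : Set (ℝ × ℝ) := {p : ℝ × ℝ | 0 < p.1 ∧ 0 < p.2} with hUdef
  have hU : IsOpen U := isOpen_quadrant
  have hf : ContDiffOn ℝ (⊤ : ℕ∞) f U := hM.1.of_le (by simp)
  have hp : ((a, a) : ℝ × ℝ) ∈ U := ⟨ha, ha⟩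
  set B : ℝ × ℝ → ℝ × ℝ → ℝ := fun v w => (fderiv ℝ (fderiv ℝ f) (a, a) v) w with hBdef
  -- the four directional second derivatives
  have line : ∀ v : ℝ × ℝ,
      deriv (deriv (fun t : ℝ => f ((a, a) + t • v))) 0 = B v v :=
    fun v => second_deriv_line hU hf hp v
  -- e1 direction
  have he1fun : (fun t : ℝ => f ((a, a) + t • ((1 : ℝ), (0 : ℝ)))) = fun t => M (a + t) a := by
    funext t; simp [hfdef, Prod.smul_mk]
  have hQ : B (1, 0) (1, 0) = charFun M a := by
    rw [← line (1, 0), he1fun]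
    have h1 : deriv (fun t : ℝ => M (a + t) a) = fun t => deriv (fun s => M s a) (a + t) :=
      funext fun t => deriv_comp_const_add (fun s => M s a) a t
    rw [h1]
    have h2 : deriv (fun t : ℝ => deriv (fun s => M s a) (a + t)) 0
        = deriv (deriv (fun s => M s a)) (a + 0) :=
      deriv_comp_const_add (deriv (fun s => M s a)) a 0
    rw [h2, add_zero, _root_.charFun]
    rw [show (2 : ℕ) = 1 + 1 from rfl, iteratedDeriv_succ, iteratedDeriv_one]
  -- e2 direction
  have hQ2 : B (0, 1) (0, 1) = charFun M a := by
    rw [← line (0, 1), ← hQ, ← line (1, 0), he1fun]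
    have hev : (fun t : ℝ => f ((a, a) + t • ((0 : ℝ), (1 : ℝ))))
        =ᶠ[nhds 0] fun t => M (a + t) a := by
      filter_upwards [Ioi_mem_nhds (show -a < (0:ℝ) by linarith)] with t ht
      have hat : 0 < a + t := by simp only [mem_Ioi] at ht; linarith
      simp only [hfdef, Prod.smul_mk, Prod.mk_add_mk, smul_eq_mul, mul_zero, mul_one, add_zero]
      exact hM.2.2.2 a (a + t) ha hat
    exact hev.deriv.deriv_eq
  -- diagonal direction
  have hDiag : B (1, 1) (1, 1) = 0 := by
    rw [← line (1, 1)]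
    have hev : (fun t : ℝ => f ((a, a) + t • ((1 : ℝ), (1 : ℝ))))
        =ᶠ[nhds 0] fun t => a + t := by
      filter_upwards [Ioi_mem_nhds (show -a < (0:ℝ) by linarith)] with t ht
      have hat : 0 < a + t := by simp only [mem_Ioi] at ht; linarith
      simp only [hfdef, Prod.smul_mk, Prod.mk_add_mk, smul_eq_mul, mul_one]
      exact mean_diag hM hat
    rw [hev.deriv.deriv_eq]
    have : deriv (fun t : ℝ => a + t) = fun _ => (1 : ℝ) := by
      funext t; exact ((hasDerivAt_id t).const_add a).deriv
    rw [this, deriv_const]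
  -- anti-diagonal
  have hAnti : (fun s : ℝ => M (a + s) (a - s)) = fun t : ℝ => f ((a, a) + t • ((1 : ℝ), (-1 : ℝ))) := by
    funext t; simp [hfdef, Prod.smul_mk, sub_eq_add_neg, mul_comm]
  rw [hAnti, line]
  -- parallelogram identity
  have hv : ((1 : ℝ), (-1 : ℝ)) = ((1 : ℝ), (0 : ℝ)) - ((0 : ℝ), (1 : ℝ)) := by
    simp [Prod.ext_iff]
  have hw : ((1 : ℝ), (1 : ℝ)) = ((1 : ℝ), (0 : ℝ)) + ((0 : ℝ), (1 : ℝ)) := by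
    simp [Prod.ext_iff]
  have expand : B (1, -1) (1, -1) + B (1, 1) (1, 1)
      = 2 * B (1, 0) (1, 0) + 2 * B (0, 1) (0, 1) := by
    rw [hv, hw]
    simp only [hBdef, map_add, map_sub, ContinuousLinearMap.add_apply,
      ContinuousLinearMap.sub_apply]
    ring
  have := expand
  rw [hDiag, hQ, hQ2] at this
  linarith

/-- If Q_{M₁} > Q_{M₂} pointwise on (0,∞), then M₁ ≥ M₂ near the first bisector. -/
theorem stmt7 (M₁ M₂ : ℝ → ℝ → ℝ) (h1 : IsMean M₁) (h2 : IsMean M₂)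
    (hQ : ∀ x : ℝ, 0 < x → charFun M₂ x < charFun M₁ x) :
    ∀ a : ℝ, 0 < a → ∃ δ > 0, ∀ s : ℝ, |s| < δ → 0 < a - |s| →
      M₂ (a + s) (a - s) ≤ M₁ (a + s) (a - s) := by
  intro a ha
  have mem0 : (0 : ℝ) ∈ Ioo (-a) a := ⟨by linarith, ha⟩
  have hIopen : IsOpen (Ioo (-a) a) := isOpen_Ioo
  -- smoothness of the slices
  have hγ : ContDiff ℝ (⊤ : ℕ∞) (fun s : ℝ => ((a + s, a - s) : ℝ × ℝ)) :=
    (contDiff_const.add contDiff_id).prodMk (contDiff_const.sub contDiff_id)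
  have hmaps : MapsTo (fun s : ℝ => ((a + s, a - s) : ℝ × ℝ)) (Ioo (-a) a)
      {p : ℝ × ℝ | 0 < p.1 ∧ 0 < p.2} := by
    intro s hs
    exact ⟨by simpa using by linarith [hs.1], by simpa using by linarith [hs.2]⟩
  have hφ : ∀ M : ℝ → ℝ → ℝ, IsMean M →
      ContDiffOn ℝ (⊤ : ℕ∞) (fun s : ℝ => M (a + s) (a - s)) (Ioo (-a) a) := by
    intro M hM
    have := (hM.1.of_le (by simp)).comp hγ.contDiffOn hmaps
    simpa [Function.comp_def] using this
  have hφ1 := hφ M₁ h1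
  have hφ2 := hφ M₂ h2
  set g : ℝ → ℝ := fun s => M₁ (a + s) (a - s) - M₂ (a + s) (a - s) with hgdef
  have hg : ContDiffOn ℝ (⊤ : ℕ∞) g (Ioo (-a) a) := hφ1.sub hφ2
  have hg1 : ContDiffOn ℝ (⊤ : ℕ∞) (deriv g) (Ioo (-a) a) :=
    hg.deriv_of_isOpen hIopen (by exact_mod_cast le_rfl)
  have hg2 : ContDiffOn ℝ (⊤ : ℕ∞) (deriv (deriv g)) (Ioo (-a) a) :=
    hg1.deriv_of_isOpen hIopen (by exact_mod_cast le_rfl)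
  -- value of the second derivative at 0
  have hd1 : ∀ M : ℝ → ℝ → ℝ, IsMean M → ContDiffOn ℝ (⊤ : ℕ∞)
      (deriv (fun s : ℝ => M (a + s) (a - s))) (Ioo (-a) a) := fun M hM =>
    (hφ M hM).deriv_of_isOpen hIopen (by exact_mod_cast le_rfl)
  have hgderiv : deriv g =ᶠ[nhds 0]
      fun s => deriv (fun s : ℝ => M₁ (a + s) (a - s)) s
        - deriv (fun s : ℝ => M₂ (a + s) (a - s)) s := by
    filter_upwards [hIopen.mem_nhds mem0] with s hs
    exact deriv_fun_sub
      ((hφ1.contDiffAt (hIopen.mem_nhds hs)).differentiableAt (by simp))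
      ((hφ2.contDiffAt (hIopen.mem_nhds hs)).differentiableAt (by simp))
  have hgpp : deriv (deriv g) 0 = 4 * charFun M₁ a - 4 * charFun M₂ a := by
    rw [hgderiv.deriv_eq]
    rw [deriv_fun_sub
      (((hd1 M₁ h1).contDiffAt (hIopen.mem_nhds mem0)).differentiableAt (by simp))
      (((hd1 M₂ h2).contDiffAt (hIopen.mem_nhds mem0)).differentiableAt (by simp))]
    rw [mean_second_deriv h1 ha, mean_second_deriv h2 ha]
  have hpos0 : 0 < deriv (deriv g) 0 := by
    rw [hgpp]; have := hQ a ha; linarith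
  -- evenness
  have heven : ∀ s : ℝ, |s| < a → g (-s) = g s := by
    intro s hs
    rw [abs_lt] at hs
    have hps : 0 < a + s := by linarith
    have hms : 0 < a - s := by linarith
    show M₁ (a + -s) (a - -s) - M₂ (a + -s) (a - -s) = _
    rw [show a + -s = a - s by ring, show a - -s = a + s by ring,
      h1.2.2.2 _ _ hms hps, h2.2.2.2 _ _ hms hps]
  have hgd0 : deriv g 0 = 0 := by
    have hev : g =ᶠ[nhds 0] fun s => g (-s) := by
      filter_upwards [hIopen.mem_nhds mem0] with s hs
      exact (heven s (by rw [abs_lt]; exact ⟨hs.1, hs.2⟩)).symm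
    have h := hev.deriv_eq
    rw [deriv_comp_neg, neg_zero] at h
    linarith
  -- find δ
  have hc : ContinuousAt (deriv (deriv g)) 0 :=
    (hg2.continuousOn.continuousAt (hIopen.mem_nhds mem0))
  have hEv : ∀ᶠ s in nhds (0 : ℝ), 0 < deriv (deriv g) s ∧ s ∈ Ioo (-a) a := by
    filter_upwards [hc.eventually_mem (Ioi_mem_nhds hpos0), hIopen.mem_nhds mem0] with s h1' h2'
    exact ⟨h1', h2'⟩
  obtain ⟨δ, hδpos, hδ⟩ := Metric.eventually_nhds_iff.mp hEv
  have hprop : ∀ s : ℝ, |s| < δ → 0 < deriv (deriv g) s ∧ s ∈ Ioo (-a) a := by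
    intro s hs; exact hδ (by simpa [Real.dist_eq] using hs)
  refine ⟨δ, hδpos, ?_⟩
  intro s hs hsa
  have hsub : Ioo (-δ) δ ⊆ Ioo (-a) a := by
    intro x hx; exact (hprop x (abs_lt.mpr ⟨hx.1, hx.2⟩)).2
  have hmono : StrictMonoOn (deriv g) (Ioo (-δ) δ) := by
    apply strictMonoOn_of_deriv_pos (convex_Ioo _ _) (hg1.continuousOn.mono hsub)
    intro x hx
    rw [interior_Ioo] at hx
    exact (hprop x (abs_lt.mpr ⟨hx.1, hx.2⟩)).1
  have hsub2 : Ico 0 δ ⊆ Ioo (-a) a := by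
    intro x hx
    exact (hprop x (by rw [abs_of_nonneg hx.1]; exact hx.2)).2
  have hMono : MonotoneOn g (Ico 0 δ) := by
    apply monotoneOn_of_deriv_nonneg (convex_Ico _ _) (hg.continuousOn.mono hsub2)
    · rw [interior_Ico]
      exact (hg.differentiableOn (by simp)).mono
        (fun x hx => hsub2 ⟨le_of_lt hx.1, hx.2⟩)
    · rw [interior_Ico]
      intro x hx
      have hlt := hmono (show (0:ℝ) ∈ Ioo (-δ) δ from ⟨by linarith, hδpos⟩)
        (show x ∈ Ioo (-δ) δ from ⟨by linarith [hx.1], hx.2⟩) hx.1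
      rw [hgd0] at hlt
      exact le_of_lt hlt
  have hg0 : g 0 = 0 := by
    show M₁ (a + 0) (a - 0) - M₂ (a + 0) (a - 0) = 0
    rw [add_zero, sub_zero, mean_diag h1 ha, mean_diag h2 ha, sub_self]
  have habs : g s = g |s| := by
    rcases abs_cases s with ⟨h, _⟩ | ⟨h, _⟩
    · rw [h]
    · rw [h]; exact (heven s (by linarith)).symm
  have hfin : g 0 ≤ g |s| := hMono ⟨le_refl 0, hδpos⟩ ⟨abs_nonneg s, hs⟩ (abs_nonneg s)
  rw [hg0, ← habs] at hfin
  simp only [hgdef] at hfin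
  linarith
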